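/- Assume a_X > b_X > 0, a_Y + b_Y > 0, b_Y > a_Y, and T_A < T_y < T_I, where T_A = max{0, −a_Y/ln(a_X/b_X)} and T_I = (b_Y − a_Y)/(2·ln(a_X/b_X)). Then there exists a unique x_L ∈ (1/2, 1) such that L(x_L) = b_X/(a_X + b_X); moreover T_X(x_L) > 0 and T_X(x) ≤ T_X(x_L) for every x ∈ (1/2, 1). -/

import Mathlib

open Real Filter Set Topology

/-- QRE response of the second player. -/
noncomputable def qreY (aY bY Ty : ℝ) (x : ℝ) : ℝ :=
  (1 + Real.exp ((bY - (aY + bY) * x) / Ty))⁻¹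

/-- QRE temperature curve for the first player. -/
noncomputable def qreTX (aX bX aY bY Ty : ℝ) (x : ℝ) : ℝ :=
  (bX - (aX + bX) * qreY aY bY Ty x) / Real.log (1 / x - 1)

/-- The auxiliary function L(x) = y(x) + x(1-x) ln(1/x-1) y'(x). -/
noncomputable def qreL (aY bY Ty : ℝ) (x : ℝ) : ℝ :=
  qreY aY bY Ty x + x * (1 - x) * Real.log (1 / x - 1) * deriv (qreY aY bY Ty) x

/-!
Write `c = b_X / (a_X + b_X)`. On `(1/2, 1)` the derivative of `T_X` is
`(b_X - (a_X + b_X) L) / (x (1 - x) ln² (x / (1 - x)))`, so it has the sign of `c - L`, and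
everything reduces to the sign of `L - c`. Since `L(1/2) = y(1/2) < c` (by `T_y < T_I`) and
`L(x) → y(1) > c` as `x → 1` (by `T_A < T_y`), `L - c` has a zero `x_L`. At every zero the
derivative of `L` is positive: eliminating `k = (a_Y + b_Y) / T_y` through the zero condition
`y - c = k x (1 - x) ln (x / (1 - x)) y (1 - y)`, this becomes an inequality between `x` and `y`,
obtained from `T_y < T_I` and `ln ((1 + t) / (1 - t)) ≥ 2 t`.
A continuous function whose derivative is positive at each of its zeros changes sign only once,
from negative to positive, so `x_L` is the unique zero, `T_X` increases up to `x_L` and decreases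
after it. Finally `L(x_L) = c` forces `y(x_L) > c`, which makes `T_X(x_L)` positive.
-/

theorem pos_of_pos_of_deriv_pos_at_zeros {f : ℝ → ℝ} {a b : ℝ} (hab : a ≤ b)
    (hf : ContinuousOn f (Icc a b)) (ha : 0 < f a)
    (hzero : ∀ z ∈ Ioc a b, f z = 0 → 0 < deriv f z) : 0 < f b := by
  by_contra! hb
  obtain ⟨r, ⟨hr, hfr⟩, hmin⟩ : ∃ r, IsLeast (Icc a b ∩ f ⁻¹' Iic 0) r :=
    (isCompact_Icc.of_isClosed_subset (hf.preimage_isClosed_of_isClosed isClosed_Icc isClosed_Iic)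
      inter_subset_left).exists_isLeast ⟨b, ⟨hab, le_rfl⟩, hb⟩
  have har : a < r := hr.1.lt_of_ne (by rintro rfl; exact hfr.not_gt ha)
  suffices ∃ w ∈ Ico a r, f w ≤ 0 by
    obtain ⟨w, hw, hfw⟩ := this
    exact (hmin ⟨⟨hw.1, hw.2.le.trans hr.2⟩, hfw⟩).not_gt hw.2
  rcases (show f r ≤ 0 from hfr).lt_or_eq with hneg | hzero_r
  · obtain ⟨w, hw, hfw⟩ :=
      intermediate_value_Icc' har.le (hf.mono (Icc_subset_Icc_right hr.2)) ⟨hneg.le, ha.le⟩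
    exact ⟨w, ⟨hw.1, hw.2.lt_of_ne (by rintro rfl; linarith)⟩, hfw.le⟩
  · obtain ⟨w, hsign, hw⟩ :=
      (((eventually_nhdsWithin_sign_eq_of_deriv_pos (hzero r ⟨har, hr.2⟩ hzero_r)
        hzero_r).filter_mono nhdsWithin_le_nhds).and (Ioo_mem_nhdsLT har)).exists
    rw [sign_neg (sub_neg.2 hw.2), sign_eq_neg_one_iff] at hsign
    exact ⟨w, Ioo_subset_Ico_self hw, hsign.le⟩

theorem neg_of_neg_of_deriv_pos_at_zeros {f : ℝ → ℝ} {a b : ℝ} (hab : a ≤ b)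
    (hf : ContinuousOn f (Icc a b)) (hb : f b < 0)
    (hzero : ∀ z ∈ Ico a b, f z = 0 → 0 < deriv f z) : f a < 0 := by
  have key := pos_of_pos_of_deriv_pos_at_zeros (f := fun t => -f (-t)) (neg_le_neg hab)
    ((hf.comp continuousOn_neg fun t ht => ⟨le_neg.2 ht.2, neg_le.1 ht.1⟩).neg)
    (by simpa using hb) fun z hz hfz => by
      rw [deriv.fun_neg, deriv_comp_neg, neg_neg]
      exact hzero (-z) ⟨le_neg.2 hz.2, neg_lt.1 hz.1⟩ (by simpa using hfz)
  simpa using key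

theorem sign_eq_sign_sub_of_deriv_pos_at_zeros {f : ℝ → ℝ} {s : Set ℝ} (hs : s.OrdConnected)
    (hf : ContinuousOn f s) (hzero : ∀ z ∈ s, f z = 0 → 0 < deriv f z)
    {x₀ x : ℝ} (hx₀ : x₀ ∈ s) (h₀ : f x₀ = 0) (hx : x ∈ s) :
    SignType.sign (f x) = SignType.sign (x - x₀) := by
  have hloc := eventually_nhdsWithin_sign_eq_of_deriv_pos (hzero x₀ hx₀ h₀) h₀
  rcases lt_trichotomy x x₀ with hlt | rfl | hgt
  · obtain ⟨w, hsign, hw⟩ :=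
      ((hloc.filter_mono nhdsWithin_le_nhds).and (Ioo_mem_nhdsLT hlt)).exists
    rw [sign_neg (sub_neg.2 hw.2), sign_eq_neg_one_iff] at hsign
    have hsub : Icc x w ⊆ s := hs.out hx (hs.out hx hx₀ ⟨hw.1.le, hw.2.le⟩)
    rw [sign_neg (sub_neg.2 hlt), sign_neg (neg_of_neg_of_deriv_pos_at_zeros hw.1.le
      (hf.mono hsub) hsign fun z hz => hzero z (hsub (Ico_subset_Icc_self hz)))]
  · rw [h₀, sub_self]
  · obtain ⟨w, hsign, hw⟩ :=
      ((hloc.filter_mono nhdsWithin_le_nhds).and (Ioo_mem_nhdsGT hgt)).exists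
    rw [sign_pos (sub_pos.2 hw.1), sign_eq_one_iff] at hsign
    have hsub : Icc w x ⊆ s := hs.out (hs.out hx₀ hx ⟨hw.1.le, hw.2.le⟩) hx
    rw [sign_pos (sub_pos.2 hgt), sign_pos (pos_of_pos_of_deriv_pos_at_zeros hw.2.le
      (hf.mono hsub) hsign fun z hz => hzero z (hsub (Ioc_subset_Icc_self hz)))]

theorem two_mul_le_log_one_add_sub_log_one_sub {t : ℝ} (h₀ : 0 ≤ t) (h₁ : t < 1) :
    2 * t ≤ log (1 + t) - log (1 - t) := by
  have := le_hasSum (hasSum_log_sub_log_of_abs_lt_one (abs_lt.2 ⟨by linarith, h₁⟩)) 0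
    fun k _ => by positivity
  simpa using this

theorem two_mul_sub_one_div_add_one_le_log {u : ℝ} (hu : 1 ≤ u) :
    2 * (u - 1) / (u + 1) ≤ log u := by
  have hu₁ : 0 < u + 1 := by linarith
  have key := two_mul_le_log_one_add_sub_log_one_sub (t := (u - 1) / (u + 1))
    (div_nonneg (by linarith) hu₁.le) ((div_lt_one hu₁).2 (by linarith))
  rw [← log_div (by positivity) (sub_pos.2 ((div_lt_one hu₁).2 (by linarith))).ne'] at key
  convert key using 2
  · ring
  · field_simp; ring

theorem two_mul_two_mul_sub_one_le_log_div {x : ℝ} (h₀ : 1 / 2 ≤ x) (h₁ : x < 1) :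
    2 * (2 * x - 1) ≤ log (x / (1 - x)) := by
  convert two_mul_sub_one_div_add_one_le_log (u := x / (1 - x))
    ((one_le_div (by linarith)).2 (by linarith)) using 1
  have : 1 - x ≠ 0 := by linarith
  field_simp
  ring

theorem two_mul_sub_div_le_log_odds_sub_log_odds {c y : ℝ} (hc : 0 < c) (hcy : c ≤ y)
    (hy : y < 1) :
    2 * (y - c) / (y + c - 2 * c * y) ≤ log (y / (1 - y)) - log (c / (1 - c)) := by
  have hy₀ : 0 < y := hc.trans_le hcy
  have hc₁ : 0 < 1 - c := by linarith
  have hy₁ : 0 < 1 - y := by linarith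
  rw [← log_div (by positivity) (by positivity)]
  convert two_mul_sub_one_div_add_one_le_log (u := y / (1 - y) / (c / (1 - c)))
    ((one_le_div (by positivity)).2 (by gcongr)) using 1
  rw [div_add_one (by positivity), div_sub_one (by positivity), mul_div_assoc, mul_div_assoc,
    div_div_div_cancel_right₀ (by positivity), div_sub_div _ _ hy₁.ne' hc₁.ne',
    div_add_div _ _ hy₁.ne' hc₁.ne', div_div_div_cancel_right₀ (by positivity)]
  ring_nf

-- Read with `k = (a_Y + b_Y) / T_y` and `y = y(x)`: `hroot` is `L(x) = c`, `hodds` is what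
-- `T_y < T_I` gives, and the conclusion is `L'(x) / k > 0`.
theorem sub_mul_one_sub_two_mul_lt {c y x k : ℝ} (hc : 0 < c) (hcy : c < y) (hy : y < 1)
    (hx : 1 / 2 < x) (hx₁ : x < 1)
    (hroot : y - c = k * (x * (1 - x)) * log (x / (1 - x)) * (y * (1 - y)))
    (hodds : log (y / (1 - y)) - log (c / (1 - c)) < k * (x - 1 / 2)) :
    (y - c) * (1 - 2 * y) < (2 * x - 1) * log (x / (1 - x)) * (y * (1 - y)) := by
  set ℓ := log (x / (1 - x))
  set P := y * (1 - y)
  set Δ := log (y / (1 - y)) - log (c / (1 - c))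
  have hP : 0 < P := mul_pos (hc.trans hcy) (by linarith)
  have hℓ : 2 * (2 * x - 1) ≤ ℓ := two_mul_two_mul_sub_one_le_log_div hx.le hx₁
  have hℓ₀ : 0 < ℓ := by linarith
  have hD : 0 < y + c - 2 * c * y := by nlinarith
  have hΔ : 2 * (y - c) ≤ Δ * (2 * P - (y - c) * (1 - 2 * y)) := by
    have := two_mul_sub_div_le_log_odds_sub_log_odds hc hcy.le hy
    rw [div_le_iff₀ hD] at this
    linarith
  have hΔ₀ : 0 < Δ := by nlinarith
  have h₁ : 4 * (x * (1 - x)) * P * Δ < y - c := by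
    refine lt_of_mul_lt_mul_left ?_ hℓ₀.le
    calc ℓ * (4 * (x * (1 - x)) * P * Δ) = 4 * ((x * (1 - x) * ℓ * P) * Δ) := by ring
      _ < 4 * ((x * (1 - x) * ℓ * P) * (k * (x - 1 / 2))) := by gcongr
      _ = 4 * ((y - c) * (x - 1 / 2)) := by rw [hroot]; ring
      _ ≤ ℓ * (y - c) := by nlinarith
  have h₂ : 8 * (x * (1 - x)) * P < 2 * P - (y - c) * (1 - 2 * y) := by
    refine lt_of_mul_lt_mul_left ?_ hΔ₀.le
    linarith
  calc (y - c) * (1 - 2 * y) < 2 * P - 8 * (x * (1 - x)) * P := by linarith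
    _ = (2 * x - 1) * (2 * (2 * x - 1)) * P := by ring
    _ ≤ (2 * x - 1) * ℓ * P := by gcongr; linarith

theorem inv_one_add_exp_lt_inv_one_add_exp_iff {u v : ℝ} :
    (1 + exp u)⁻¹ < (1 + exp v)⁻¹ ↔ v < u := by
  rw [inv_lt_inv₀ (by positivity) (by positivity), add_lt_add_iff_left, exp_lt_exp]

theorem log_odds_inv_one_add_exp (u : ℝ) :
    log ((1 + exp u)⁻¹ / (1 - (1 + exp u)⁻¹)) = -u := by
  have : (1 + exp u)⁻¹ / (1 - (1 + exp u)⁻¹) = exp (-u) := by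
    rw [exp_neg]
    field_simp
    ring
  rw [this, log_exp]

theorem log_one_div_sub_one {x : ℝ} (hx : x ≠ 0) : log (1 / x - 1) = -log (x / (1 - x)) := by
  rw [← log_inv, inv_div, div_sub_one hx]

theorem log_div_one_sub_pos {x : ℝ} (hx : x ∈ Ioo (1 / 2 : ℝ) 1) : 0 < log (x / (1 - x)) :=
  log_pos ((one_lt_div (by linarith [hx.2])).2 (by linarith [hx.1]))

theorem hasDerivAt_log_div_one_sub {x : ℝ} (hx : x ∈ Ioo (0 : ℝ) 1) :
    HasDerivAt (fun x => log (x / (1 - x))) (x * (1 - x))⁻¹ x := by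
  have h₁ : 1 - x ≠ 0 := by linarith [hx.2]
  have := ((hasDerivAt_id' x).div ((hasDerivAt_id' x).const_sub 1) h₁).log
    (div_ne_zero hx.1.ne' h₁)
  refine this.congr_deriv ?_
  simp only [Pi.div_apply]
  field_simp
  ring

section QRE

variable {aY bY Ty : ℝ}

theorem qreY_pos (x : ℝ) : 0 < qreY aY bY Ty x := by
  unfold qreY; positivity

theorem qreY_lt_one (x : ℝ) : qreY aY bY Ty x < 1 :=
  inv_lt_one_of_one_lt₀ (lt_add_of_pos_right 1 (exp_pos _))

theorem hasDerivAt_qreY (x : ℝ) :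
    HasDerivAt (qreY aY bY Ty)
      ((aY + bY) / Ty * (qreY aY bY Ty x * (1 - qreY aY bY Ty x))) x := by
  have := ((((hasDerivAt_id' x).const_mul (aY + bY)).const_sub bY).div_const Ty).exp.const_add 1
    |>.inv (by positivity)
  refine this.congr_deriv ?_
  simp only [qreY]
  field_simp
  ring

-- Thresholds are written as `(1 + exp v)⁻¹`, the shape of `qreY`, so that comparing them with
-- `qreY` amounts to comparing exponents.
theorem qreY_one_half_lt {v : ℝ} (hv : v < (bY - aY) / (2 * Ty)) :
    qreY aY bY Ty (1 / 2) < (1 + exp v)⁻¹ := by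
  rw [qreY, inv_one_add_exp_lt_inv_one_add_exp_iff]
  convert hv using 1
  ring

theorem lt_qreY_one {v : ℝ} (hv : -aY / Ty < v) : (1 + exp v)⁻¹ < qreY aY bY Ty 1 := by
  rw [qreY, inv_one_add_exp_lt_inv_one_add_exp_iff]
  convert hv using 1
  ring

theorem qreL_eq {x : ℝ} (hx : x ≠ 0) :
    qreL aY bY Ty x = qreY aY bY Ty x - (aY + bY) / Ty * (x * (1 - x)) * log (x / (1 - x)) *
      (qreY aY bY Ty x * (1 - qreY aY bY Ty x)) := by
  rw [qreL, (hasDerivAt_qreY x).deriv, log_one_div_sub_one hx]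
  ring

theorem hasDerivAt_qreL {x : ℝ} (hx : x ∈ Ioo (0 : ℝ) 1) :
    HasDerivAt (qreL aY bY Ty)
      ((aY + bY) / Ty * (qreY aY bY Ty x * (1 - qreY aY bY Ty x)) * log (x / (1 - x)) *
        ((2 * x - 1) - (aY + bY) / Ty * (x * (1 - x)) * (1 - 2 * qreY aY bY Ty x))) x := by
  have hY := hasDerivAt_qreY (aY := aY) (bY := bY) (Ty := Ty) x
  have h := hY.sub ((((hasDerivAt_id' x).mul ((hasDerivAt_id' x).const_sub 1)).const_mul
    ((aY + bY) / Ty) |>.mul (hasDerivAt_log_div_one_sub hx)).mul (hY.mul (hY.const_sub 1)))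
  refine (h.congr_of_eventuallyEq ?_).congr_deriv ?_
  · filter_upwards [Ioo_mem_nhds hx.1 hx.2] with w hw
    simp only [Pi.mul_apply, Pi.sub_apply, qreL_eq hw.1.ne']
  · have : x * (1 - x) ≠ 0 := (mul_pos hx.1 (by linarith [hx.2])).ne'
    simp only [Pi.mul_apply, mul_assoc _ (x * (1 - x)), mul_inv_cancel₀ this]
    ring

theorem continuousOn_qreL : ContinuousOn (qreL aY bY Ty) (Ioo 0 1) :=
  fun _ hx => (hasDerivAt_qreL hx).continuousAt.continuousWithinAt

theorem qreL_one_half : qreL aY bY Ty (1 / 2) = qreY aY bY Ty (1 / 2) := by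
  norm_num [qreL]

theorem tendsto_qreL_one :
    Tendsto (qreL aY bY Ty) (𝓝[<] 1) (𝓝 (qreY aY bY Ty 1)) := by
  have hY : Continuous (qreY aY bY Ty) :=
    continuous_iff_continuousAt.2 fun x => (hasDerivAt_qreY x).continuousAt
  set φ := fun w => qreY aY bY Ty w - (aY + bY) / Ty *
      (w * (1 - w) * log w - w * ((1 - w) * log (1 - w))) *
      (qreY aY bY Ty w * (1 - qreY aY bY Ty w))
  have hφ : ContinuousAt φ 1 := by fun_prop (disch := norm_num)
  rw [show qreY aY bY Ty 1 = φ 1 by simp [φ]]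
  refine (hφ.tendsto.mono_left nhdsWithin_le_nhds).congr' ?_
  filter_upwards [Ioo_mem_nhdsLT one_pos] with w hw
  rw [qreL_eq hw.1.ne', log_div hw.1.ne' (by linarith [hw.2])]
  ring

theorem exists_qreL_eq {c : ℝ} (h₀ : qreY aY bY Ty (1 / 2) < c) (h₁ : c < qreY aY bY Ty 1) :
    ∃ x ∈ Ioo (1 / 2 : ℝ) 1, qreL aY bY Ty x = c := by
  obtain ⟨x₁, hcx₁, hx₁⟩ := ((tendsto_qreL_one.eventually (lt_mem_nhds h₁)).and
    (Ioo_mem_nhdsLT (by norm_num : (1 / 2 : ℝ) < 1))).exists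
  obtain ⟨x, hx, hLx⟩ := intermediate_value_Ioo hx₁.1.le
    (continuousOn_qreL.mono fun w hw => ⟨by linarith [hw.1], hw.2.trans_lt hx₁.2⟩)
    ⟨qreL_one_half (aY := aY) ▸ h₀, hcx₁⟩
  exact ⟨x, ⟨hx.1, hx.2.trans hx₁.2⟩, hLx⟩

theorem lt_qreY_of_qreL_eq {c z : ℝ} (hTy : 0 < Ty) (hY : 0 < aY + bY)
    (hz : z ∈ Ioo (1 / 2 : ℝ) 1) (hroot : qreL aY bY Ty z = c) : c < qreY aY bY Ty z := by
  have hy := qreY_lt_one (aY := aY) (bY := bY) (Ty := Ty) z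
  rw [← hroot, qreL_eq (by linarith [hz.1])]
  exact sub_lt_self _ (mul_pos (mul_pos (mul_pos (by positivity)
    (mul_pos (by linarith [hz.1]) (by linarith [hz.2]))) (log_div_one_sub_pos hz))
    (mul_pos (qreY_pos z) (by linarith)))

theorem deriv_qreL_pos {v z : ℝ} (hTy : 0 < Ty) (hY : 0 < aY + bY)
    (hv : v < (bY - aY) / (2 * Ty)) (hz : z ∈ Ioo (1 / 2 : ℝ) 1)
    (hroot : qreL aY bY Ty z = (1 + exp v)⁻¹) : 0 < deriv (qreL aY bY Ty) z := by
  have hcy := lt_qreY_of_qreL_eq hTy hY hz hroot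
  rw [(hasDerivAt_qreL ⟨by linarith [hz.1], hz.2⟩).deriv]
  rw [qreL_eq (by linarith [hz.1])] at hroot
  set k := (aY + bY) / Ty with hk
  set y := qreY aY bY Ty z with hy
  set c := (1 + exp v)⁻¹ with hc
  have hroot' : y - c = k * (z * (1 - z)) * log (z / (1 - z)) * (y * (1 - y)) := by linarith
  have hodds : log (y / (1 - y)) - log (c / (1 - c)) < k * (z - 1 / 2) := by
    rw [hy, hc, qreY, log_odds_inv_one_add_exp, log_odds_inv_one_add_exp]
    have : k * (z - 1 / 2) - (-((bY - (aY + bY) * z) / Ty) - -v) = (bY - aY) / (2 * Ty) - v := by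
      rw [hk]
      field_simp
      ring
    linarith
  have key := sub_mul_one_sub_two_mul_lt (by positivity) hcy (qreY_lt_one z) hz.1 hz.2 hroot' hodds
  calc 0 < k * ((2 * z - 1) * log (z / (1 - z)) * (y * (1 - y)) - (y - c) * (1 - 2 * y)) :=
        mul_pos (by positivity) (by linarith)
    _ = _ := by rw [hroot']; ring

theorem sign_qreL_sub {v xL : ℝ} (hTy : 0 < Ty) (hY : 0 < aY + bY)
    (hv : v < (bY - aY) / (2 * Ty)) (hxL : xL ∈ Ioo (1 / 2 : ℝ) 1)
    (hroot : qreL aY bY Ty xL = (1 + exp v)⁻¹) :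
    ∀ x ∈ Ioo (1 / 2 : ℝ) 1,
      SignType.sign (qreL aY bY Ty x - (1 + exp v)⁻¹) = SignType.sign (x - xL) :=
  fun _ hx => sign_eq_sign_sub_of_deriv_pos_at_zeros
    (f := fun x => qreL aY bY Ty x - (1 + exp v)⁻¹) ordConnected_Ioo ((continuousOn_qreL.mono fun _ hw => ⟨by linarith [hw.1], hw.2⟩).sub
      continuousOn_const)
    (fun z hz hz₀ => by
      rw [deriv_sub_const]
      exact deriv_qreL_pos hTy hY hv hz (sub_eq_zero.1 hz₀))
    hxL (sub_eq_zero.2 hroot) hx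

theorem hasDerivAt_qreTX {aX bX x : ℝ} (hx : x ∈ Ioo (1 / 2 : ℝ) 1) :
    HasDerivAt (qreTX aX bX aY bY Ty)
      ((bX - (aX + bX) * qreL aY bY Ty x) / (x * (1 - x) * log (x / (1 - x)) ^ 2)) x := by
  have hx₀ : x ∈ Ioo (0 : ℝ) 1 := ⟨by linarith [hx.1], hx.2⟩
  have h := (((hasDerivAt_qreY (aY := aY) (bY := bY) (Ty := Ty) x).const_mul (aX + bX)).sub_const
    bX).div (hasDerivAt_log_div_one_sub hx₀) (log_div_one_sub_pos hx).ne'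
  refine (h.congr_of_eventuallyEq ?_).congr_deriv ?_
  · filter_upwards [Ioo_mem_nhds hx₀.1 hx₀.2] with w hw
    simp only [Pi.div_apply]
    rw [qreTX, log_one_div_sub_one hw.1.ne', div_neg, ← neg_div, neg_sub]
  · have h₀ : x ≠ 0 := hx₀.1.ne'
    have h₁ : 1 - x ≠ 0 := by linarith [hx.2]
    have hℓ := (log_div_one_sub_pos hx).ne'
    rw [qreL_eq h₀]
    generalize (aY + bY) / Ty = k
    field_simp
    ring

theorem qreTX_pos_of_qreL_eq {aX bX z : ℝ} (hTy : 0 < Ty) (hY : 0 < aY + bY)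
    (hX : 0 < aX + bX) (hz : z ∈ Ioo (1 / 2 : ℝ) 1) (hroot : qreL aY bY Ty z = bX / (aX + bX)) :
    0 < qreTX aX bX aY bY Ty z := by
  have hy := lt_qreY_of_qreL_eq hTy hY hz hroot
  rw [div_lt_iff₀ hX] at hy
  rw [qreTX, log_one_div_sub_one (by linarith [hz.1])]
  exact div_pos_of_neg_of_neg (by linarith) (neg_neg_of_pos (log_div_one_sub_pos hz))

theorem isMaxOn_qreTX {aX bX xL : ℝ} (hX : 0 < aX + bX) (hxL : xL ∈ Ioo (1 / 2 : ℝ) 1)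
    (hsign : ∀ z ∈ Ioo (1 / 2 : ℝ) 1,
      SignType.sign (qreL aY bY Ty z - bX / (aX + bX)) = SignType.sign (z - xL)) :
    IsMaxOn (qreTX aX bX aY bY Ty) (Ioo (1 / 2) 1) xL := by
  have hden : ∀ z ∈ Ioo (1 / 2 : ℝ) 1, 0 ≤ z * (1 - z) * log (z / (1 - z)) ^ 2 :=
    fun z hz => mul_nonneg (mul_nonneg (by linarith [hz.1]) (by linarith [hz.2])) (sq_nonneg _)
  have hleft : ∀ z ∈ Ioo (1 / 2) xL, 0 ≤ deriv (qreTX aX bX aY bY Ty) z := fun z hz => by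
    have hz' : z ∈ Ioo (1 / 2 : ℝ) 1 := ⟨hz.1, hz.2.trans hxL.2⟩
    have hL := hsign z hz'
    rw [sign_neg (sub_neg.2 hz.2), sign_eq_neg_one_iff, sub_neg, lt_div_iff₀ hX] at hL
    rw [(hasDerivAt_qreTX hz').deriv]
    exact div_nonneg (by linarith) (hden z hz')
  have hright : ∀ z ∈ Ioo xL 1, deriv (qreTX aX bX aY bY Ty) z ≤ 0 := fun z hz => by
    have hz' : z ∈ Ioo (1 / 2 : ℝ) 1 := ⟨hxL.1.trans hz.1, hz.2⟩
    have hL := hsign z hz'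
    rw [sign_pos (sub_pos.2 hz.1), sign_eq_one_iff, sub_pos, div_lt_iff₀ hX] at hL
    rw [(hasDerivAt_qreTX hz').deriv]
    exact div_nonpos_of_nonpos_of_nonneg (by linarith) (hden z hz')
  have hdiff : DifferentiableOn ℝ (qreTX aX bX aY bY Ty) (Ioo (1 / 2) 1) :=
    fun z hz => (hasDerivAt_qreTX hz).differentiableAt.differentiableWithinAt
  exact isMaxOn_Ioo_of_deriv (hasDerivAt_qreTX hxL).continuousAt
    (hdiff.mono (Ioo_subset_Ioo_right hxL.2.le)) (hdiff.mono (Ioo_subset_Ioo_left hxL.1.le))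
    hleft hright

end QRE

theorem stmt_13_general (aX bX aY bY Ty : ℝ) (hTy : 0 < Ty)
    (hab : aX > bX) (hbX : bX > 0) (hY : aY + bY > 0)
    (hlo : max 0 (-aY / Real.log (aX / bX)) < Ty)
    (hhi : Ty < (bY - aY) / (2 * Real.log (aX / bX))) :
    ∃ xL ∈ Set.Ioo (1/2 : ℝ) 1,
      qreL aY bY Ty xL = bX / (aX + bX) ∧
      (∀ x ∈ Set.Ioo (1/2 : ℝ) 1, qreL aY bY Ty x = bX / (aX + bX) → x = xL) ∧
      0 < qreTX aX bX aY bY Ty xL ∧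
      ∀ x ∈ Set.Ioo (1/2 : ℝ) 1, qreTX aX bX aY bY Ty x ≤ qreTX aX bX aY bY Ty xL := by
  have hX : 0 < aX + bX := by linarith
  have hlog : 0 < log (aX / bX) := log_pos ((one_lt_div hbX).2 hab)
  have hc : bX / (aX + bX) = (1 + exp (log (aX / bX)))⁻¹ := by
    rw [exp_log (div_pos (by linarith) hbX), one_add_div hbX.ne', inv_div, add_comm]
  have hI : log (aX / bX) < (bY - aY) / (2 * Ty) := by
    rw [lt_div_iff₀ (by positivity)] at hhi ⊢
    linarith
  have hA : -aY / Ty < log (aX / bX) := by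
    have := (le_max_right _ _).trans_lt hlo
    rw [div_lt_iff₀ hlog] at this
    rw [div_lt_iff₀ hTy]
    linarith
  obtain ⟨xL, hxL, hLxL⟩ := exists_qreL_eq (qreY_one_half_lt hI) (lt_qreY_one hA)
  have hsign := sign_qreL_sub hTy hY hI hxL hLxL
  rw [← hc] at hLxL hsign
  refine ⟨xL, hxL, hLxL, fun x hx hLx => ?_, qreTX_pos_of_qreL_eq hTy hY hX hxL hLxL,
    isMaxOn_iff.1 (isMaxOn_qreTX hX hxL hsign)⟩
  have := hsign x hx
  rwa [hLx, sub_self, _root_.sign_zero, eq_comm, _root_.sign_eq_zero_iff, sub_eq_zero] at this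

theorem stmt_13 (aX bX aY bY Ty : ℝ) (hTy : 0 < Ty)
    (hab : aX > bX) (hbX : bX > 0) (hY : aY + bY > 0) (hba : bY > aY)
    (hlo : max 0 (-aY / Real.log (aX / bX)) < Ty)
    (hhi : Ty < (bY - aY) / (2 * Real.log (aX / bX))) :
    ∃ xL ∈ Set.Ioo (1/2 : ℝ) 1,
      qreL aY bY Ty xL = bX / (aX + bX) ∧
      (∀ x ∈ Set.Ioo (1/2 : ℝ) 1, qreL aY bY Ty x = bX / (aX + bX) → x = xL) ∧
      0 < qreTX aX bX aY bY Ty xL ∧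
      ∀ x ∈ Set.Ioo (1/2 : ℝ) 1, qreTX aX bX aY bY Ty x ≤ qreTX aX bX aY bY Ty xL :=
  stmt_13_general aX bX aY bY Ty hTy hab hbX hY hlo hhi
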